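/- Fix β > 0, x,y ∈ (0,1), and let δ = h_β(x,y). Then the dilogarithm identity holds: Li₂(e^{-β(1-x-y+δ)}) = π²/6 - β²(x-δ)(y-δ) - Li₂(e^{-βδ}) - Li₂(e^{-β(x-δ)}) - Li₂(e^{-β(y-δ)}) - Li₂(e^{-β}) + Li₂(e^{-βx}) + Li₂(e^{-βy}) + Li₂(e^{-β(1-x)}) + Li₂(e^{-β(1-y)}). In particular, a_β(x,y; h_β(x,y)) = 0. -/

import Mathlib

/-!
Put `a = e^{-β}`, `u = e^{-βx}`, `v = e^{-βy}` and `b = e^{-β h_β(x,y)}`. The definition of `h_β`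
says exactly that `b (1 - a) = u + v - uv - a`, and the identity becomes Mantel's relation among
the dilogarithms of `a, u, v, b` and their ratios. To prove it, let `v` run over `t ∈ (a, 1]`
with `b = b(t)` defined by the same equation. Each `Li₂ z` differentiates to
`-log (1 - z) · (log z)'`, and the factorisations `(b - u)(b - t) = (1 - b)(ut - ab)` and
`(ut - ab)(1 - t) = (b - t)(t - a)` make the total derivative vanish. At `t = 1` we have `b = 1`,
and the relation reduces to `Li₂ 1 = π²/6`.
-/

/-- The limiting height profile `h_β(x,y)` of the Mallows measure. -/
noncomputable def hFn (β x y : ℝ) : ℝ :=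
  (1 / β) * (Real.log (1 - Real.exp (-β)) -
    Real.log (Real.exp (-β * x) + Real.exp (-β * y) - Real.exp (-β * (x + y)) - Real.exp (-β)))

/-- The real dilogarithm `Li₂(x) = ∑_{n ≥ 1} xⁿ/n²`. -/
noncomputable def Li2 (x : ℝ) : ℝ := ∑' n : ℕ, x ^ (n + 1) / ((n : ℝ) + 1) ^ 2

/-- The large-deviation rate function `a_β(x,y;δ)` of the Mallows height function. -/
noncomputable def rateFn (β x y δ : ℝ) : ℝ :=
  (1 / β) * (β ^ 2 * (x - δ) * (y - δ) - Real.pi ^ 2 / 6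
    + Li2 (Real.exp (-β * δ)) + Li2 (Real.exp (-β * (x - δ)))
    + Li2 (Real.exp (-β * (y - δ))) + Li2 (Real.exp (-β * (1 - x - y + δ)))
    + Li2 (Real.exp (-β)) - Li2 (Real.exp (-β * x)) - Li2 (Real.exp (-β * y))
    - Li2 (Real.exp (-β * (1 - x))) - Li2 (Real.exp (-β * (1 - y))))

open Real Set

theorem Li2_one : Li2 1 = π ^ 2 / 6 := by
  have h := (hasSum_nat_add_iff' 1).mpr hasSum_zeta_two
  simp at h
  simpa [Li2] using h.tsum_eq

theorem continuousOn_Li2 : ContinuousOn Li2 (Icc (-1) 1) := by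
  refine continuousOn_tsum (fun n => by fun_prop)
    ((summable_nat_add_iff 1).mpr (summable_one_div_nat_pow.mpr one_lt_two)) fun n x hx => ?_
  rw [norm_div, norm_pow, Real.norm_eq_abs, Real.norm_of_nonneg (by positivity)]
  push_cast
  gcongr
  exact pow_le_one₀ (abs_nonneg x) (abs_le.mpr hx)

theorem hasDerivAt_Li2_tsum {x : ℝ} (hx : |x| < 1) :
    HasDerivAt Li2 (∑' n : ℕ, x ^ n / ((n : ℝ) + 1)) x := by
  obtain ⟨r, hxr, hr1⟩ := exists_between hx
  refine hasDerivAt_tsum_of_isPreconnected (u := fun n : ℕ => r ^ n) (t := Ioo (-r) r) (y₀ := 0)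
    (g' := fun n y => y ^ n / ((n : ℝ) + 1))
    (summable_geometric_of_lt_one ((abs_nonneg x).trans hxr.le) hr1) isOpen_Ioo
    isPreconnected_Ioo (fun n y _ => ?_) (fun n y hy => ?_) ?_ ?_ (abs_lt.mp hxr)
  · refine ((hasDerivAt_pow (n + 1) y).div_const (((n : ℝ) + 1) ^ 2)).congr_deriv ?_
    push_cast
    field_simp
  · rw [norm_div, norm_pow, Real.norm_eq_abs, Real.norm_of_nonneg (by positivity)]
    calc |y| ^ n / ((n : ℝ) + 1) ≤ |y| ^ n := div_le_self (by positivity) (by simp)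
      _ ≤ r ^ n := pow_le_pow_left₀ (abs_nonneg y) (abs_lt.mpr hy).le n
  · exact ⟨by linarith [abs_nonneg x], by linarith [abs_nonneg x]⟩
  · simp

theorem hasDerivAt_Li2 {x : ℝ} (hx0 : x ≠ 0) (hx : |x| < 1) :
    HasDerivAt Li2 (-log (1 - x) / x) x := by
  convert hasDerivAt_Li2_tsum hx using 1
  refine (((hasSum_pow_div_log_of_abs_lt_one hx).div_const x).congr_fun fun n => ?_).tsum_eq.symm
  field_simp
  ring

theorem HasDerivAt.Li2 {f : ℝ → ℝ} {f' t : ℝ} (hf : HasDerivAt f f' t) (h : f t ∈ Ioo 0 1) :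
    HasDerivAt (fun s => Li2 (f s)) (-Real.log (1 - f t) * (f' / f t)) t :=
  ((hasDerivAt_Li2 h.1.ne' (abs_lt.mpr ⟨by linarith [h.1], h.2⟩)).comp t hf).congr_deriv
    (by ring)

noncomputable def mantelB (a u t : ℝ) : ℝ := (u + t - u * t - a) / (1 - a)

noncomputable def mantelG (a u t : ℝ) : ℝ :=
  Li2 (a * mantelB a u t / (u * t)) + Li2 (mantelB a u t) + Li2 (u / mantelB a u t)
    + Li2 (t / mantelB a u t) + log (u / mantelB a u t) * log (t / mantelB a u t)
    - Li2 t - Li2 (a / t)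

section Mantel

variable {a u t : ℝ}

theorem mul_one_sub_mantelB (ha1 : a < 1) : mantelB a u t * (1 - a) = u + t - u * t - a := by
  rw [mantelB, div_mul_cancel₀ _ (sub_ne_zero.2 ha1.ne')]

theorem mantelB_bounds (hau : a < u) (hu1 : u < 1) (hat : a < t) (ht1 : t ≤ 1) :
    u < mantelB a u t ∧ t ≤ mantelB a u t ∧ mantelB a u t ≤ 1 ∧
      a * mantelB a u t < u * t := by
  have h1a : 0 < 1 - a := by linarith
  unfold mantelB
  refine ⟨?_, ?_, ?_, ?_⟩
  · rw [lt_div_iff₀ h1a]; nlinarith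
  · rw [le_div_iff₀ h1a]; nlinarith
  · rw [div_le_one h1a]; nlinarith
  · rw [← mul_div_assoc, div_lt_iff₀ h1a]; nlinarith

theorem mantelB_bounds_of_lt_one (hau : a < u) (hu1 : u < 1) (ht1 : t < 1) :
    t < mantelB a u t ∧ mantelB a u t < 1 := by
  have h1a : 0 < 1 - a := by linarith
  unfold mantelB
  constructor
  · rw [lt_div_iff₀ h1a]; nlinarith
  · rw [div_lt_one h1a]; nlinarith

theorem mantelB_one (ha1 : a < 1) : mantelB a u 1 = 1 := by
  rw [mantelB, div_eq_one_iff_eq (sub_ne_zero.2 ha1.ne')]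
  ring

theorem hasDerivAt_mantelB (a u t : ℝ) :
    HasDerivAt (mantelB a u) ((1 - u) / (1 - a)) t := by
  have := (((hasDerivAt_id t).const_add u).sub ((hasDerivAt_id t).const_mul u)).sub_const a
  exact (this.div_const (1 - a)).congr_deriv (by ring)

theorem mantelG_args_mem_Ioo (ha : 0 < a) (hau : a < u) (hu1 : u < 1) (hat : a < t)
    (ht1 : t < 1) :
    a * mantelB a u t / (u * t) ∈ Ioo 0 1 ∧ mantelB a u t ∈ Ioo 0 1 ∧
      u / mantelB a u t ∈ Ioo 0 1 ∧ t / mantelB a u t ∈ Ioo 0 1 := by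
  obtain ⟨hub, -, -, habut⟩ := mantelB_bounds hau hu1 hat ht1.le
  obtain ⟨htb, hb1⟩ := mantelB_bounds_of_lt_one hau hu1 ht1
  have hu0 : 0 < u := ha.trans hau
  have ht0 : 0 < t := ha.trans hat
  have hb0 : 0 < mantelB a u t := hu0.trans hub
  exact ⟨⟨by positivity, (div_lt_one (by positivity)).2 habut⟩, ⟨hb0, hb1⟩,
    ⟨by positivity, (div_lt_one hb0).2 hub⟩, ⟨by positivity, (div_lt_one hb0).2 htb⟩⟩

theorem mantelB_log_relations (ha : 0 < a) (hau : a < u) (hu1 : u < 1) (hat : a < t)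
    (ht1 : t < 1) {b : ℝ} (hb : mantelB a u t = b) :
    log (1 - u / b) + log (1 - t / b)
        = log (1 - a * b / (u * t)) + log (1 - b) + log (t / b) + log (u / b) ∧
      log (1 - a * b / (u * t)) + log (u / b) + log (1 - t)
        = log (1 - t / b) + log (1 - a / t) := by
  obtain ⟨⟨-, z1⟩, ⟨hb0, hb1⟩, ⟨-, z3⟩, ⟨-, z4⟩⟩ :=
    hb ▸ mantelG_args_mem_Ioo ha hau hu1 hat ht1
  have hB : b * (1 - a) = u + t - u * t - a := hb ▸ mul_one_sub_mantelB (hau.trans hu1)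
  have ht0 : 0 < t := ha.trans hat
  have hu0 : 0 < u := ha.trans hau
  have s1 : 0 < 1 - a * b / (u * t) := sub_pos.2 z1
  have s2 : 0 < 1 - b := sub_pos.2 hb1
  have s3 : 0 < 1 - u / b := sub_pos.2 z3
  have s4 : 0 < 1 - t / b := sub_pos.2 z4
  have s5 : 0 < 1 - a / t := sub_pos.2 ((div_lt_one ht0).2 hat)
  have s6 : 0 < 1 - t := sub_pos.2 ht1
  constructor
  · rw [← log_mul, ← log_mul, ← log_mul, ← log_mul]
    · congr 1
      field_simp
      linear_combination b * hB
    all_goals positivity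
  · rw [← log_mul, ← log_mul, ← log_mul]
    · congr 1
      field_simp
      linear_combination (-t) * hB
    all_goals positivity

theorem hasDerivAt_mantelG (ha : 0 < a) (hau : a < u) (hu1 : u < 1) (hat : a < t)
    (ht1 : t < 1) : HasDerivAt (mantelG a u) 0 t := by
  obtain ⟨h1, h2, h3, h4⟩ := mantelG_args_mem_Ioo ha hau hu1 hat ht1
  have ht0 : 0 < t := ha.trans hat
  have h7 : a / t ∈ Ioo 0 1 := ⟨div_pos ha ht0, (div_lt_one ht0).2 hat⟩
  have hBd := hasDerivAt_mantelB a u t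
  have dz1 := (hBd.const_mul a).fun_div ((hasDerivAt_id' t).const_mul u)
    (mul_pos (ha.trans hau) ht0).ne'
  have dz3 := (hasDerivAt_const t u).fun_div hBd h2.1.ne'
  have dz4 := (hasDerivAt_id' t).fun_div hBd h2.1.ne'
  have dz7 := (hasDerivAt_const t a).fun_div (hasDerivAt_id' t) ht0.ne'
  have hG := ((((((dz1.Li2 h1).add (hBd.Li2 h2)).add (dz3.Li2 h3)).add (dz4.Li2 h4)).add
    ((dz3.log h3.1.ne').mul (dz4.log h4.1.ne'))).sub ((hasDerivAt_id' t).Li2 ⟨ht0, ht1⟩)).sub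
    (dz7.Li2 h7)
  obtain ⟨C1, C2⟩ := mantelB_log_relations ha hau hu1 hat ht1 rfl
  set b := mantelB a u t
  set b' := (1 - u) / (1 - a)
  have hu0 : 0 < u := ha.trans hau
  have hb0 : 0 < b := h2.1
  have dlog1 : (a * b' * (u * t) - a * b * (u * 1)) / (u * t) ^ 2 / (a * b / (u * t))
      = b' / b - 1 / t := by
    field_simp
  have dlog3 : (0 * b - u * b') / b ^ 2 / (u / b) = -(b' / b) := by
    field_simp
    ring
  have dlog4 : (1 * b - t * b') / b ^ 2 / (t / b) = 1 / t - b' / b := by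
    field_simp
  have dlog7 : (0 * t - a * 1) / t ^ 2 / (a / t) = -(1 / t) := by
    field_simp
    ring
  refine hG.congr_deriv ?_
  rw [dlog1, dlog3, dlog4, dlog7]
  linear_combination (b' / b) * C1 + (1 / t) * C2

@[fun_prop]
theorem continuous_mantelB (a u : ℝ) : Continuous (mantelB a u) := by
  unfold mantelB
  fun_prop

theorem ContinuousOn.Li2 {f : ℝ → ℝ} {s : Set ℝ} (hf : ContinuousOn f s)
    (h : ∀ x ∈ s, f x ∈ Icc 0 1) : ContinuousOn (fun x => Li2 (f x)) s :=
  continuousOn_Li2.comp hf fun x hx => ⟨by linarith [(h x hx).1], (h x hx).2⟩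

theorem continuousOn_mantelG (ha : 0 < a) (hau : a < u) (hu1 : u < 1) :
    ContinuousOn (mantelG a u) (Ioc a 1) := by
  have hpos : ∀ t ∈ Ioc a 1, 0 < t ∧ 0 < mantelB a u t := fun t ht =>
    ⟨ha.trans ht.1, (ha.trans hau).trans (mantelB_bounds hau hu1 ht.1 ht.2).1⟩
  have hB : ContinuousOn (mantelB a u) (Ioc a 1) := (continuous_mantelB a u).continuousOn
  have hz1 : ContinuousOn (fun t => a * mantelB a u t / (u * t)) (Ioc a 1) :=
    .div₀ (by fun_prop) (by fun_prop) fun t ht => (mul_pos (ha.trans hau) (hpos t ht).1).ne'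
  have hz3 : ContinuousOn (fun t => u / mantelB a u t) (Ioc a 1) :=
    .div₀ (by fun_prop) hB fun t ht => (hpos t ht).2.ne'
  have hz4 : ContinuousOn (fun t => t / mantelB a u t) (Ioc a 1) :=
    .div₀ (by fun_prop) hB fun t ht => (hpos t ht).2.ne'
  have hz7 : ContinuousOn (fun t => a / t) (Ioc a 1) :=
    .div₀ (by fun_prop) (by fun_prop) fun t ht => (hpos t ht).1.ne'
  refine ((((((hz1.Li2 ?_).add (hB.Li2 ?_)).add (hz3.Li2 ?_)).add (hz4.Li2 ?_)).add
    ((hz3.log ?_).mul (hz4.log ?_))).sub ((continuousOn_id' _).Li2 ?_)).sub (hz7.Li2 ?_)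
  all_goals
    intro t ht
    obtain ⟨ht0, hb0⟩ := hpos t ht
    obtain ⟨hat, ht1⟩ := ht
    obtain ⟨hub, htb, hb1, habut⟩ := mantelB_bounds hau hu1 hat ht1
    have hu0 := ha.trans hau
    first
      | positivity
      | refine ⟨by positivity, ?_⟩
        first
          | exact ht1
          | exact hb1
          | (rw [div_le_one (by positivity)]; linarith)

theorem mantelG_one (ha1 : a < 1) : mantelG a u 1 = π ^ 2 / 6 + Li2 u + Li2 (a / u) - Li2 a := by
  rw [mantelG, mantelB_one ha1]
  simp only [mul_one, div_one, log_one, mul_zero]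
  rw [Li2_one]
  ring

end Mantel

theorem mantel_identity {a u v : ℝ} (ha : 0 < a) (hau : a < u) (hu1 : u < 1) (hav : a < v)
    (hv1 : v ≤ 1) : mantelG a u v = π ^ 2 / 6 + Li2 u + Li2 (a / u) - Li2 a := by
  have hconst := constant_of_has_deriv_right_zero
    ((continuousOn_mantelG ha hau hu1).mono (Icc_subset_Ioc_iff hv1 |>.2 ⟨hav, le_rfl⟩))
    (fun t ht => (hasDerivAt_mantelG ha hau hu1 (hav.trans_le ht.1) ht.2).hasDerivWithinAt)
    1 (right_mem_Icc.2 hv1)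
  rw [← hconst, mantelG_one (hau.trans hu1)]

theorem exp_neg_mul_hFn {β x y : ℝ} (hβ : 0 < β) (hx : x < 1) (hy : 0 < y) :
    exp (-β * hFn β x y) = mantelB (exp (-β)) (exp (-β * x)) (exp (-β * y)) := by
  have ha1 : exp (-β) < 1 := exp_lt_one_iff.2 (by linarith)
  have hau : exp (-β) < exp (-β * x) := exp_lt_exp.2 (by nlinarith)
  have hv1 : exp (-β * y) < 1 := exp_lt_one_iff.2 (by nlinarith)
  have hnum : 0 < exp (-β * x) + exp (-β * y) - exp (-β * x) * exp (-β * y) - exp (-β) := by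
    nlinarith [mul_pos (sub_pos.2 hau) (sub_pos.2 hv1), exp_pos (-β * y)]
  have hexp : -β * hFn β x y = log (mantelB (exp (-β)) (exp (-β * x)) (exp (-β * y))) := by
    rw [hFn, mul_add (-β), exp_add, mantelB, log_div hnum.ne' (sub_pos.2 ha1).ne']
    field_simp
    ring
  rw [hexp]
  exact exp_log (div_pos hnum (sub_pos.2 ha1))

/-- The dilogarithm identity at `δ = h_β(x,y)`, and in particular the vanishing of the
rate function at its critical point: `a_β(x,y; h_β(x,y)) = 0`. -/
theorem hFn_dilog_identity (β x y : ℝ) (hβ : 0 < β)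
    (hx : x ∈ Set.Ioo (0:ℝ) 1) (hy : y ∈ Set.Ioo (0:ℝ) 1) :
    (Li2 (Real.exp (-β * (1 - x - y + hFn β x y)))
      = Real.pi ^ 2 / 6 - β ^ 2 * (x - hFn β x y) * (y - hFn β x y)
        - Li2 (Real.exp (-β * hFn β x y))
        - Li2 (Real.exp (-β * (x - hFn β x y)))
        - Li2 (Real.exp (-β * (y - hFn β x y)))
        - Li2 (Real.exp (-β))
        + Li2 (Real.exp (-β * x)) + Li2 (Real.exp (-β * y))
        + Li2 (Real.exp (-β * (1 - x))) + Li2 (Real.exp (-β * (1 - y)))) ∧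
    rateFn β x y (hFn β x y) = 0 := by
  obtain ⟨hx0, hx1⟩ := hx
  obtain ⟨hy0, hy1⟩ := hy
  have key := mantel_identity (exp_pos (-β)) (exp_lt_exp.2 (by nlinarith : -β < -β * x))
    (exp_lt_one_iff.2 (by nlinarith : -β * x < 0)) (exp_lt_exp.2 (by nlinarith : -β < -β * y))
    (exp_lt_one_iff.2 (by nlinarith : -β * y < 0)).le
  rw [mantelG, ← exp_neg_mul_hFn hβ hx1 hy0] at key
  simp only [← exp_add, ← exp_sub, log_exp] at key
  refine ⟨?_, mul_eq_zero_of_right _ ?_⟩ <;> ring_nf at key ⊢ <;> linarith
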